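/- For every nonnegative integer r, every n ∈ {2, …, N} and every f ∈ ℂ^N, one has the two-sided bound (2/π)^r · λ_n^{−r/2} ‖L^{r/2} P_n f‖₂ ≤ ‖(T_{λ_n^{−1/2}} − I)^r P_n f‖₂ ≤ λ_n^{−r/2} ‖L^{r/2} P_n f‖₂. -/

import Mathlib

open Matrix

noncomputable section

/-- Euclidean (2-)norm on `ℂ^N`. -/
def cnorm2 {N : ℕ} (f : Fin N → ℂ) : ℝ := Real.sqrt (∑ i, ‖f i‖ ^ 2)

/-- The spectral operator `Σ_j c_j u_j u_j^*`. -/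
def specOp {N : ℕ} (u : Fin N → Fin N → ℂ) (c : Fin N → ℂ) : Matrix (Fin N) (Fin N) ℂ :=
  ∑ j, c j • Matrix.vecMulVec (u j) (star (u j))

/-- The graph translation operator `T_s = Σ_j e^{i s √λ_j} u_j u_j^*`. -/
def Tmat {N : ℕ} (u : Fin N → Fin N → ℂ) (lam : Fin N → ℝ) (s : ℝ) :
    Matrix (Fin N) (Fin N) ℂ :=
  specOp u (fun j => Complex.exp (Complex.I * (s : ℂ) * (Real.sqrt (lam j) : ℂ)))

/-- The `r`-th modulus of smoothness `ω_r(f,t) = sup_{|s| ≤ t} ‖(T_s - I)^r f‖₂`. -/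
def omegaMod {N : ℕ} (u : Fin N → Fin N → ℂ) (lam : Fin N → ℝ) (r : ℕ) (f : Fin N → ℂ)
    (t : ℝ) : ℝ :=
  ⨆ s : {s : ℝ // |s| ≤ t}, cnorm2 (((Tmat u lam s.1 - 1) ^ r).mulVec f)

/-- Functional calculus power `L^x = Σ_j λ_j^x u_j u_j^*` (with `0^0 = 1`). -/
def Lpow {N : ℕ} (u : Fin N → Fin N → ℂ) (lam : Fin N → ℝ) (x : ℝ) :
    Matrix (Fin N) (Fin N) ℂ :=
  specOp u (fun j => ((lam j ^ x : ℝ) : ℂ))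

/-- Orthogonal projection `P_n = Σ_{j=1}^n u_j u_j^*` onto `span(u_1, …, u_n)`
(`u_k` corresponds to the index `k-1 : Fin N`). -/
def Pproj {N : ℕ} (u : Fin N → Fin N → ℂ) (n : ℕ) : Matrix (Fin N) (Fin N) ℂ :=
  specOp u (fun j => if (j : ℕ) < n then 1 else 0)

/-! All operators involved are functions of `L`, diagonal in the eigenbasis `u`: conjugating by
the unitary matrix with columns `u j` turns `specOp u c` into `diagonal c`. Both sides of the
estimate are therefore weighted `ℓ²` norms of the spectral coefficients of `P_n f`, and it suffices
to compare the symbols for `j < n`. There `θ = √(λ_j / λ_n) ∈ [0, 1]` and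
`|e^{iθ} - 1| = 2 sin (θ / 2)` lies between `(2/π) θ` (Jordan's inequality) and `θ`. -/

section Cnorm2

variable {N : ℕ}

theorem cnorm2_eq_sqrt_re_dotProduct (v : Fin N → ℂ) : cnorm2 v = √(star v ⬝ᵥ v).re := by
  simp only [cnorm2, dotProduct, Pi.star_apply, Complex.star_def, Complex.conj_mul',
    Complex.re_sum]
  norm_cast

theorem cnorm2_mulVec_of_mem_unitaryGroup {U : Matrix (Fin N) (Fin N) ℂ}
    (hU : U ∈ unitaryGroup (Fin N) ℂ) (v : Fin N → ℂ) : cnorm2 (U *ᵥ v) = cnorm2 v := by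
  rw [cnorm2_eq_sqrt_re_dotProduct, cnorm2_eq_sqrt_re_dotProduct, star_mulVec,
    ← dotProduct_mulVec, mulVec_mulVec, ← star_eq_conjTranspose, mem_unitaryGroup_iff'.mp hU,
    one_mulVec]

theorem cnorm2_le_mul_of_norm_le {x y : Fin N → ℂ} {K : ℝ} (hK : 0 ≤ K)
    (h : ∀ i, ‖x i‖ ≤ K * ‖y i‖) : cnorm2 x ≤ K * cnorm2 y := by
  unfold cnorm2
  rw [← Real.sqrt_sq hK, ← Real.sqrt_mul (sq_nonneg K), Finset.mul_sum]
  gcongr with i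
  rw [← mul_pow]
  exact pow_le_pow_left₀ (norm_nonneg _) (h i) 2

end Cnorm2

namespace SpectralCalculus

variable {N : ℕ} {u : Fin N → Fin N → ℂ}

theorem transpose_of_mem_unitaryGroup
    (hu : ∀ i j, star (u i) ⬝ᵥ u j = if i = j then 1 else 0) :
    (Matrix.of u)ᵀ ∈ unitaryGroup (Fin N) ℂ := by
  rw [mem_unitaryGroup_iff']
  ext i j
  simpa [Matrix.mul_apply, one_apply, dotProduct] using hu i j

def eigenvectorUnitary (hu : ∀ i j, star (u i) ⬝ᵥ u j = if i = j then 1 else 0) :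
    unitaryGroup (Fin N) ℂ :=
  ⟨(Matrix.of u)ᵀ, transpose_of_mem_unitaryGroup hu⟩

theorem specOp_sub (c d : Fin N → ℂ) : specOp u c - specOp u d = specOp u (c - d) := by
  simp only [specOp, Pi.sub_apply, sub_smul, Finset.sum_sub_distrib]

variable (hu : ∀ i j, star (u i) ⬝ᵥ u j = if i = j then 1 else 0)
include hu

theorem specOp_eq_conj (c : Fin N → ℂ) :
    specOp u c = Unitary.conjStarAlgAut ℂ _ (eigenvectorUnitary hu) (diagonal c) := by
  ext i k
  rw [Unitary.conjStarAlgAut_apply, mul_apply]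
  simp [specOp, eigenvectorUnitary, mul_diagonal, Matrix.sum_apply, vecMulVec_apply, mul_assoc,
    mul_left_comm]

theorem specOp_mul (c d : Fin N → ℂ) : specOp u c * specOp u d = specOp u (c * d) := by
  simp only [specOp_eq_conj hu, ← map_mul, diagonal_mul_diagonal']
  rfl

theorem specOp_one : specOp u 1 = 1 := by
  rw [specOp_eq_conj hu, Pi.one_def, diagonal_one, map_one]

theorem specOp_pow (c : Fin N → ℂ) (r : ℕ) : specOp u c ^ r = specOp u (c ^ r) := by
  rw [specOp_eq_conj hu, ← map_pow, diagonal_pow, specOp_eq_conj hu]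

theorem cnorm2_specOp_mulVec (c f : Fin N → ℂ) :
    cnorm2 (specOp u c *ᵥ f)
      = cnorm2 (c * (star (eigenvectorUnitary hu : Matrix _ _ ℂ) *ᵥ f)) := by
  rw [specOp_eq_conj hu, Unitary.conjStarAlgAut_apply, ← mulVec_mulVec, ← mulVec_mulVec,
    cnorm2_mulVec_of_mem_unitaryGroup (eigenvectorUnitary hu).2]
  congr 1
  ext j
  exact mulVec_diagonal _ _ j

theorem cnorm2_specOp_mulVec_le {c d : Fin N → ℂ} {K : ℝ} (hK : 0 ≤ K)
    (h : ∀ j, ‖c j‖ ≤ K * ‖d j‖) (f : Fin N → ℂ) :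
    cnorm2 (specOp u c *ᵥ f) ≤ K * cnorm2 (specOp u d *ᵥ f) := by
  rw [cnorm2_specOp_mulVec hu, cnorm2_specOp_mulVec hu]
  refine cnorm2_le_mul_of_norm_le hK fun j => ?_
  simp only [Pi.mul_apply, norm_mul, ← mul_assoc]
  exact mul_le_mul_of_nonneg_right (h j) (norm_nonneg _)

theorem mul_cnorm2_specOp_mulVec_le {c d : Fin N → ℂ} {K : ℝ} (hK : 0 < K)
    (h : ∀ j, K * ‖d j‖ ≤ ‖c j‖) (f : Fin N → ℂ) :
    K * cnorm2 (specOp u d *ᵥ f) ≤ cnorm2 (specOp u c *ᵥ f) :=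
  (le_inv_mul_iff₀ hK).1 <|
    cnorm2_specOp_mulVec_le hu (inv_nonneg.2 hK.le) (fun j => (le_inv_mul_iff₀ hK).2 (h j)) f

end SpectralCalculus

open Complex in
theorem two_div_pi_mul_le_norm_exp_I_mul_ofReal_sub_one {x : ℝ} (h0 : 0 ≤ x)
    (hx : x ≤ Real.pi) : 2 / Real.pi * x ≤ ‖exp (I * x) - 1‖ := by
  rw [norm_exp_I_mul_ofReal_sub_one]
  calc 2 / Real.pi * x = 2 * (2 / Real.pi * (x / 2)) := by ring
    _ ≤ 2 * Real.sin (x / 2) := by gcongr; exact Real.mul_le_sin (by linarith) (by linarith)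
    _ ≤ ‖2 * Real.sin (x / 2)‖ := Real.le_norm_self _

open Complex in
theorem norm_translation_symbol_bounds {Λ μ : ℝ} (hΛ : 0 < Λ) (hμ : 0 ≤ μ) (hμΛ : μ ≤ Λ)
    (r : ℕ) :
    (2 / Real.pi) ^ r * Λ ^ (-(r : ℝ) / 2) * μ ^ ((r : ℝ) / 2)
        ≤ ‖(exp (I * (Λ ^ (-(1 : ℝ) / 2) : ℝ) * (√μ : ℝ)) - 1) ^ r‖ ∧
      ‖(exp (I * (Λ ^ (-(1 : ℝ) / 2) : ℝ) * (√μ : ℝ)) - 1) ^ r‖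
        ≤ Λ ^ (-(r : ℝ) / 2) * μ ^ ((r : ℝ) / 2) := by
  set θ := Λ ^ (-(1 : ℝ) / 2) * √μ
  have hθ0 : 0 ≤ θ := by positivity
  have hθ1 : θ ≤ 1 := by
    calc θ ≤ Λ ^ (-(1 : ℝ) / 2) * √Λ := by unfold θ; gcongr
      _ = 1 := by rw [Real.sqrt_eq_rpow, ← Real.rpow_add hΛ]; norm_num
  have hpow : Λ ^ (-(r : ℝ) / 2) * μ ^ ((r : ℝ) / 2) = θ ^ r := by
    rw [mul_pow, Real.sqrt_eq_rpow, ← Real.rpow_natCast, ← Real.rpow_natCast,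
      ← Real.rpow_mul hΛ.le, ← Real.rpow_mul hμ]
    ring_nf
  have harg : I * (Λ ^ (-(1 : ℝ) / 2) : ℝ) * (√μ : ℝ) = I * θ := by push_cast [θ]; ring
  rw [harg, norm_pow, mul_assoc, hpow, ← mul_pow]
  refine ⟨pow_le_pow_left₀ (by positivity) ?_ r, pow_le_pow_left₀ (norm_nonneg _) ?_ r⟩
  · exact two_div_pi_mul_le_norm_exp_I_mul_ofReal_sub_one hθ0
      (hθ1.trans (by linarith [Real.pi_gt_three]))
  · simpa [Real.norm_of_nonneg hθ0] using Real.norm_exp_I_mul_ofReal_sub_one_le (x := θ)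

open SpectralCalculus in
/-- For every nonnegative integer `r`, every `n ∈ {2, …, N}` and every
`f ∈ ℂ^N`,
`(2/π)^r λ_n^{-r/2} ‖L^{r/2} P_n f‖₂ ≤ ‖(T_{λ_n^{-1/2}} - I)^r P_n f‖₂ ≤ λ_n^{-r/2} ‖L^{r/2} P_n f‖₂`. -/
theorem stmt1
    (N : ℕ) (hN : 2 ≤ N)
    (u : Fin N → Fin N → ℂ)
    (hu : ∀ i j, star (u i) ⬝ᵥ u j = if i = j then 1 else 0)
    (lam : Fin N → ℝ) (hmono : Monotone lam)
    (hlam0 : lam ⟨0, by omega⟩ = 0) (hlam1 : 0 < lam ⟨1, by omega⟩)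
    (r : ℕ) (n : ℕ) (hn2 : 2 ≤ n) (hnN : n ≤ N) (f : Fin N → ℂ) :
    (2 / Real.pi) ^ r * lam ⟨n - 1, by omega⟩ ^ (-(r : ℝ) / 2) *
        cnorm2 ((Lpow u lam ((r : ℝ) / 2)).mulVec ((Pproj u n).mulVec f)) ≤
      cnorm2 (((Tmat u lam (lam ⟨n - 1, by omega⟩ ^ (-(1 : ℝ) / 2)) - 1) ^ r).mulVec
        ((Pproj u n).mulVec f)) ∧
    cnorm2 (((Tmat u lam (lam ⟨n - 1, by omega⟩ ^ (-(1 : ℝ) / 2)) - 1) ^ r).mulVec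
        ((Pproj u n).mulVec f)) ≤
      lam ⟨n - 1, by omega⟩ ^ (-(r : ℝ) / 2) *
        cnorm2 ((Lpow u lam ((r : ℝ) / 2)).mulVec ((Pproj u n).mulVec f)) := by
  set Λ := lam ⟨n - 1, by omega⟩
  have hlam : ∀ j, 0 ≤ lam j := fun j => hlam0 ▸ hmono (Fin.le_def.2 (Nat.zero_le _))
  have hΛ : 0 < Λ := hlam1.trans_le (hmono (Fin.mk_le_mk.2 (by omega)))
  set P : Fin N → ℂ := fun j => if (j : ℕ) < n then 1 else 0
  set e : Fin N → ℂ := fun j =>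
    Complex.exp (Complex.I * (Λ ^ (-(1 : ℝ) / 2) : ℝ) * (√(lam j) : ℝ)) - 1
  set d : Fin N → ℂ := fun j => (lam j ^ ((r : ℝ) / 2) : ℝ)
  have hT : ((Tmat u lam (Λ ^ (-(1 : ℝ) / 2)) - 1) ^ r) *ᵥ (Pproj u n *ᵥ f)
      = specOp u (e ^ r * P) *ᵥ f := by
    rw [mulVec_mulVec, Tmat, ← specOp_one hu, specOp_sub, specOp_pow hu, Pproj,
      specOp_mul hu]
    rfl
  have hL : Lpow u lam ((r : ℝ) / 2) *ᵥ (Pproj u n *ᵥ f) = specOp u (d * P) *ᵥ f := by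
    rw [mulVec_mulVec, Lpow, Pproj, specOp_mul hu]
  have hsymb : ∀ j, (2 / Real.pi) ^ r * Λ ^ (-(r : ℝ) / 2) * ‖(d * P) j‖ ≤ ‖(e ^ r * P) j‖ ∧
      ‖(e ^ r * P) j‖ ≤ Λ ^ (-(r : ℝ) / 2) * ‖(d * P) j‖ := by
    intro j
    by_cases hj : (j : ℕ) < n
    · have hjΛ : lam j ≤ Λ := hmono (Fin.le_def.2 (show (j : ℕ) ≤ n - 1 by omega))
      simpa [P, d, e, hj, ← mul_assoc, abs_of_nonneg (Real.rpow_nonneg (hlam j) _)]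
        using norm_translation_symbol_bounds hΛ (hlam j) hjΛ r
    · simp [P, hj]
  rw [hT, hL]
  exact ⟨mul_cnorm2_specOp_mulVec_le hu (by positivity) (fun j => (hsymb j).1) f,
    cnorm2_specOp_mulVec_le hu (by positivity) (fun j => (hsymb j).2) f⟩
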